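/- Let N be a positive integer and suppose m (1 ≤ m ≤ N) lies in the Φ-set of N. Then for every natural number k, m^(k*φ(N)+1) ≡ m (mod N). -/
import Mathlib


theorem pow_modEq_of_phiSet (N m : ℕ) (hN : 0 < N) (hm : 1 ≤ m) (hmN : m ≤ N)
    (h : Nat.gcd (Nat.gcd m N) (N / Nat.gcd m N) = 1) (k : ℕ) :
    m ^ (k * Nat.totient N + 1) ≡ m [MOD N] := by
  set P := Nat.gcd m N with hP
  set Q := N / P with hQ
  have hPdvdN : P ∣ N := Nat.gcd_dvd_right m N
  have hPQ : P * Q = N := Nat.mul_div_cancel' hPdvdN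
  have hPm : P ∣ m := Nat.gcd_dvd_left m N
  have hcop : Nat.Coprime P Q := h
  -- mod P
  have h1 : m ^ (k * Nat.totient N + 1) ≡ m [MOD P] := by
    have h0 : m ≡ 0 [MOD P] := (Nat.modEq_zero_iff_dvd).mpr hPm
    calc m ^ (k * Nat.totient N + 1) ≡ 0 ^ (k * Nat.totient N + 1) [MOD P] :=
          h0.pow _
      _ = 0 := by simp
      _ ≡ m [MOD P] := h0.symm
  -- mod Q
  have hQdvdN : Q ∣ N := Nat.div_dvd_of_dvd hPdvdN
  have hmQ : Nat.Coprime m Q := by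
    have hd : Nat.gcd m Q ∣ Nat.gcd P Q :=
      Nat.dvd_gcd
        (Nat.dvd_gcd (Nat.gcd_dvd_left m Q) ((Nat.gcd_dvd_right m Q).trans hQdvdN))
        (Nat.gcd_dvd_right m Q)
    exact Nat.eq_one_of_dvd_one (h ▸ hd)
  have h2 : m ^ (k * Nat.totient N + 1) ≡ m [MOD Q] := by
    have hphi : Nat.totient Q ∣ Nat.totient N := Nat.totient_dvd_of_dvd hQdvdN
    obtain ⟨c, hc⟩ := hphi
    have heul : m ^ Nat.totient Q ≡ 1 [MOD Q] := Nat.ModEq.pow_totient hmQ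
    calc m ^ (k * Nat.totient N + 1)
        = (m ^ Nat.totient Q) ^ (k * c) * m := by
          rw [← pow_mul, ← pow_succ]
          ring_nf
          rw [hc]; ring_nf
      _ ≡ 1 ^ (k * c) * m [MOD Q] := (heul.pow _).mul_right m
      _ = m := by simp
  have := Nat.modEq_and_modEq_iff_modEq_mul hcop |>.mp ⟨h1, h2⟩
  rwa [hPQ] at this
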